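/- arXiv:2507.18080 — 3 statements merged into one kernel-verified Lean document; each statement's English description precedes it below -/
import Mathlib

section
/- Let t > 0 and let G : (0,t) → [0,∞) be integrable on (0,t) and bounded on [a,t) for every a ∈ (0,t). Then there exists a constant C > 0 such that for all ε ∈ (0, 1/2), ∬_{0<u<v<t} G(v−u) / ((u+ε²)(t−v+ε²)) du dv ≤ C (log(1/ε))². -/
/-!
Write `e = ε²`. At a point of the triangle, either `v - u ≥ t/2`, where `G(v - u)` is bounded,
or `u + (t - v) > t/2`, so one of the factors `u + e`, `t - v + e` exceeds `t/4`. Hence the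
integrand is dominated by `B/((u+e)(t-v+e)) + (4/t) G(v-u)/(u+e) + (4/t) G(v-u)/(t-v+e)`.
By Tonelli and translation invariance the first term integrates to at most `B ℓ²` and the
other two to at most `(4/t) ℓ ∫ G` each, where `ℓ = ∫₀ᵗ dx/(x+e) = log((t+e)/e)`, and
`ℓ ≤ 2(t+1) log(1/ε)`.
-/

open Real MeasureTheory Set
open ENNReal (ofReal)
open scoped ENNReal

section AddCommGroup

variable {E : Type*} [MeasurableSpace E] [AddCommGroup E] [MeasurableAdd₂ E] [MeasurableNeg E]
  {μ : Measure E} [SFinite μ] [μ.IsAddLeftInvariant] {f g : E → ℝ≥0∞}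

theorem lintegral_prod_fst_mul_comp_sub (hf : AEMeasurable f μ) (hg : AEMeasurable g μ) :
    ∫⁻ p, f p.1 * g (p.2 - p.1) ∂μ.prod μ = (∫⁻ x, f x ∂μ) * ∫⁻ x, g x ∂μ := by
  rw [← (measurePreserving_prod_add μ μ).lintegral_comp_emb
    (MeasurableEquiv.shearAddRight E).measurableEmbedding]
  simpa using lintegral_prod_mul hf hg

theorem lintegral_prod_snd_mul_comp_sub [μ.IsNegInvariant] (hf : AEMeasurable f μ)
    (hg : AEMeasurable g μ) :
    ∫⁻ p, f p.2 * g (p.2 - p.1) ∂μ.prod μ = (∫⁻ x, f x ∂μ) * ∫⁻ x, g x ∂μ := by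
  rw [← Measure.measurePreserving_swap.lintegral_comp_emb
    MeasurableEquiv.prodComm.measurableEmbedding]
  simpa [lintegral_neg_eq_self] using lintegral_prod_fst_mul_comp_sub hf
    (hg.comp_quasiMeasurePreserving (Measure.measurePreserving_neg μ).quasiMeasurePreserving)

end AddCommGroup

theorem lintegral_prod_kernel_sum_eq {κ g : ℝ → ℝ≥0∞} (hκ : Measurable κ) (hg : AEMeasurable g)
    (t : ℝ) {b c : ℝ≥0∞} (hb : b ≠ ∞) (hc : c ≠ ∞) :
    ∫⁻ p : ℝ × ℝ, b * (κ p.1 * κ (t - p.2)) + c * (κ p.1 * g (p.2 - p.1)) +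
        c * (κ (t - p.2) * g (p.2 - p.1)) =
      b * (∫⁻ x, κ x) ^ 2 + 2 * c * (∫⁻ x, κ x) * ∫⁻ x, g x := by
  have hκ' : Measurable fun v => κ (t - v) := hκ.comp (by fun_prop)
  have hgd : AEMeasurable (fun p : ℝ × ℝ => g (p.2 - p.1)) (volume.prod volume) :=
    hg.comp_quasiMeasurePreserving ((quasiMeasurePreserving_sub volume volume).comp
      Measure.measurePreserving_swap.quasiMeasurePreserving)
  have hF₁ : AEMeasurable (fun p : ℝ × ℝ => b * (κ p.1 * κ (t - p.2))) (volume.prod volume) :=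
    (((hκ.comp measurable_fst).mul (hκ'.comp measurable_snd)).const_mul _).aemeasurable
  have hF₃ : AEMeasurable (fun p : ℝ × ℝ => c * (κ (t - p.2) * g (p.2 - p.1)))
      (volume.prod volume) :=
    ((hκ'.comp measurable_snd).aemeasurable.mul hgd).const_mul _
  rw [Measure.volume_eq_prod, lintegral_add_right' _ hF₃, lintegral_add_left' hF₁,
    lintegral_const_mul' _ _ hb, lintegral_const_mul' _ _ hc, lintegral_const_mul' _ _ hc,
    lintegral_prod_mul (g := fun v => κ (t - v)) hκ.aemeasurable hκ'.aemeasurable,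
    lintegral_prod_fst_mul_comp_sub hκ.aemeasurable hg,
    lintegral_prod_snd_mul_comp_sub (f := fun v => κ (t - v)) hκ'.aemeasurable hg,
    lintegral_sub_left_eq_self κ t]
  ring

theorem lintegral_Ioo_ofReal_inv_add {a e : ℝ} (ha : 0 ≤ a) (he : 0 < e) :
    ∫⁻ x in Ioo 0 a, ofReal (x + e)⁻¹ = ofReal (log ((a + e) / e)) := by
  have hint : IntervalIntegrable (fun x => (x + e)⁻¹) volume 0 a := by
    refine ContinuousOn.intervalIntegrable ((continuousOn_id.add continuousOn_const).inv₀ ?_)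
    intro x hx
    rw [uIcc_of_le ha] at hx
    exact (by linarith [hx.1] : 0 < x + e).ne'
  rw [← ofReal_integral_eq_lintegral_ofReal (hint.1.mono_set Ioo_subset_Ioc_self)
      ((ae_restrict_iff' measurableSet_Ioo).2 (ae_of_all _ fun x hx => by
        have := hx.1; positivity)),
    ← integral_Ioc_eq_integral_Ioo, ← intervalIntegral.integral_of_le ha,
    intervalIntegral.integral_comp_add_right (fun x => x⁻¹), zero_add,
    integral_inv_of_pos he (by linarith)]

theorem inv_add_le_four_div {t a e : ℝ} (ht : 0 < t) (he : 0 ≤ e) (ha : t / 4 < a) :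
    (a + e)⁻¹ ≤ 4 / t := by
  rw [← inv_div]
  gcongr
  linarith

theorem ofReal_div_mul_le {t e a b x B : ℝ} (ht : 0 < t) (he : 0 ≤ e) (ha : 0 < a)
    (hb : 0 < b) (h : x ≤ B ∨ t < 2 * (a + b)) :
    ofReal (x / ((a + e) * (b + e))) ≤
      ofReal B * (ofReal (a + e)⁻¹ * ofReal (b + e)⁻¹) +
        ofReal (4 / t) * (ofReal (a + e)⁻¹ * ofReal x) +
        ofReal (4 / t) * (ofReal (b + e)⁻¹ * ofReal x) := by
  rw [div_eq_mul_inv, mul_inv, ENNReal.ofReal_mul' (by positivity),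
    ENNReal.ofReal_mul (by positivity)]
  rcases h with hxB | hab
  · calc _ ≤ ofReal B * (ofReal (a + e)⁻¹ * ofReal (b + e)⁻¹) := by gcongr
      _ ≤ _ := le_add_right (le_add_right le_rfl)
  · rcases lt_or_ge (t / 4) a with ha' | ha'
    · calc _ ≤ ofReal x * (ofReal (4 / t) * ofReal (b + e)⁻¹) := by
            gcongr; exact inv_add_le_four_div ht he ha'
        _ = ofReal (4 / t) * (ofReal (b + e)⁻¹ * ofReal x) := by ring
        _ ≤ _ := le_add_left le_rfl
    · calc _ ≤ ofReal x * (ofReal (a + e)⁻¹ * ofReal (4 / t)) := by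
            gcongr; exact inv_add_le_four_div ht he (by linarith)
        _ = ofReal (4 / t) * (ofReal (a + e)⁻¹ * ofReal x) := by ring
        _ ≤ _ := le_add_right (le_add_left le_rfl)

theorem setLIntegral_triangle_le {t e B : ℝ} {G : ℝ → ℝ} (ht : 0 < t) (he : 0 < e)
    (hG : AEMeasurable G (volume.restrict (Ioo 0 t))) (hB : ∀ s ∈ Ico (t / 2) t, G s ≤ B) :
    ∫⁻ p in {q : ℝ × ℝ | 0 < q.1 ∧ q.1 < q.2 ∧ q.2 < t},
        ofReal (G (p.2 - p.1) / ((p.1 + e) * (t - p.2 + e))) ≤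
      ofReal B * ofReal (log ((t + e) / e)) ^ 2 +
        2 * ofReal (4 / t) * ofReal (log ((t + e) / e)) * ∫⁻ s in Ioo 0 t, ofReal (G s) := by
  set κ : ℝ → ℝ≥0∞ := (Ioo 0 t).indicator fun u => ofReal (u + e)⁻¹
  set g : ℝ → ℝ≥0∞ := (Ioo 0 t).indicator fun s => ofReal (G s)
  have hκ : Measurable κ := Measurable.indicator (by fun_prop) measurableSet_Ioo
  have hg : AEMeasurable g := (aemeasurable_indicator_iff measurableSet_Ioo).2 hG.ennreal_ofReal
  have hS : MeasurableSet {q : ℝ × ℝ | 0 < q.1 ∧ q.1 < q.2 ∧ q.2 < t} := by measurability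
  have hpt : ∀ p ∈ {q : ℝ × ℝ | 0 < q.1 ∧ q.1 < q.2 ∧ q.2 < t},
      ofReal (G (p.2 - p.1) / ((p.1 + e) * (t - p.2 + e))) ≤
        ofReal B * (κ p.1 * κ (t - p.2)) + ofReal (4 / t) * (κ p.1 * g (p.2 - p.1)) +
          ofReal (4 / t) * (κ (t - p.2) * g (p.2 - p.1)) := by
    rintro p ⟨hu, huv, hv⟩
    have hu' : p.1 ∈ Ioo 0 t := ⟨hu, by linarith⟩
    have hv' : t - p.2 ∈ Ioo 0 t := ⟨by linarith, by linarith⟩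
    have hd : p.2 - p.1 ∈ Ioo 0 t := ⟨by linarith, by linarith⟩
    simp only [κ, g, indicator_of_mem hu', indicator_of_mem hv', indicator_of_mem hd]
    refine ofReal_div_mul_le ht he.le hu hv'.1 ?_
    rcases le_or_gt (t / 2) (p.2 - p.1) with hfar | hnear
    · exact .inl (hB _ ⟨hfar, hd.2⟩)
    · exact .inr (by linarith)
  calc _ ≤ _ := setLIntegral_mono' hS hpt
    _ ≤ _ := setLIntegral_le_lintegral _ _
    _ = _ := by
      rw [lintegral_prod_kernel_sum_eq hκ hg t ENNReal.ofReal_ne_top ENNReal.ofReal_ne_top,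
        lintegral_indicator measurableSet_Ioo, lintegral_indicator measurableSet_Ioo,
        lintegral_Ioo_ofReal_inv_add ht.le he]

theorem one_half_lt_log_one_div {ε : ℝ} (hε : 0 < ε) (hε' : ε < 1 / 2) :
    1 / 2 < log (1 / ε) :=
  calc (1 / 2 : ℝ) < log 2 := by linarith [log_two_gt_d9]
    _ ≤ log (1 / ε) := log_le_log (by norm_num) (by rw [le_div_iff₀ hε]; linarith)

theorem log_div_sq_le {t ε : ℝ} (ht : 0 ≤ t) (hε : 0 < ε) (hε' : ε < 1 / 2) :
    log ((t + ε ^ 2) / ε ^ 2) ≤ 2 * (t + 1) * log (1 / ε) := by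
  have hL := one_half_lt_log_one_div hε hε'
  have hnum : log (t + ε ^ 2) ≤ t := by
    linarith [log_le_sub_one_of_pos (by positivity : 0 < t + ε ^ 2), (by nlinarith : ε ^ 2 < 1)]
  have hden : log (ε ^ 2) = -2 * log (1 / ε) := by
    rw [log_pow, one_div, log_inv]; ring
  rw [log_div (by positivity) (by positivity), hden]
  nlinarith

theorem sq_add_mul_le_of_le_mul {B c K l L : ℝ} (hB : 0 ≤ B) (hc : 0 ≤ c) (hl₀ : 0 ≤ l)
    (hl : l ≤ K * L) (hL : 1 / 2 < L) :
    B * l ^ 2 + c * l ≤ (B * K ^ 2 + 2 * c * K + 1) * L ^ 2 := by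
  have hK : 0 ≤ K := nonneg_of_mul_nonneg_left (hl₀.trans hl) (by linarith)
  have hl2 : l ^ 2 ≤ (K * L) ^ 2 := pow_le_pow_left₀ hl₀ hl 2
  have hcl : c * l ≤ 2 * c * K * L ^ 2 := calc
    c * l ≤ c * (K * L) := mul_le_mul_of_nonneg_left hl hc
    _ ≤ 2 * c * K * L ^ 2 := by
      nlinarith [mul_nonneg (mul_nonneg hc hK) (by nlinarith : 0 ≤ L * (2 * L - 1))]
  nlinarith [mul_le_mul_of_nonneg_left hl2 hB, sq_nonneg L]

theorem double_integral_log_sq_bound_general (t : ℝ) (ht : 0 < t) (G : ℝ → ℝ)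
    (hG_int : IntegrableOn G (Set.Ioo 0 t))
    (hG_bdd : ∀ a ∈ Set.Ioo (0 : ℝ) t, ∃ B : ℝ, ∀ s ∈ Set.Ico a t, G s ≤ B) :
    ∃ C > (0 : ℝ), ∀ ε ∈ Set.Ioo (0 : ℝ) (1 / 2),
      ∫⁻ p in {q : ℝ × ℝ | 0 < q.1 ∧ q.1 < q.2 ∧ q.2 < t},
          ENNReal.ofReal (G (p.2 - p.1) / ((p.1 + ε ^ 2) * (t - p.2 + ε ^ 2)))
        ≤ ENNReal.ofReal (C * Real.log (1 / ε) ^ 2) := by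
  obtain ⟨B, hB₀, hB⟩ : ∃ B ≥ 0, ∀ s ∈ Ico (t / 2) t, G s ≤ B := by
    obtain ⟨B, hB⟩ := hG_bdd (t / 2) ⟨by linarith, by linarith⟩
    exact ⟨max B 0, le_max_right _ _, fun s hs => (hB s hs).trans (le_max_left _ _)⟩
  obtain ⟨M, hM₀, hM⟩ : ∃ M ≥ 0, ∫⁻ s in Ioo 0 t, ofReal (G s) = ofReal M :=
    ⟨_, ENNReal.toReal_nonneg, (ENNReal.ofReal_toReal hG_int.lintegral_lt_top.ne).symm⟩
  have hc : 0 ≤ 2 * (4 / t) * M := by positivity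
  refine ⟨B * (2 * (t + 1)) ^ 2 + 2 * (2 * (4 / t) * M) * (2 * (t + 1)) + 1, by positivity,
    fun ε ⟨hε, hε'⟩ => ?_⟩
  set l := log ((t + ε ^ 2) / ε ^ 2)
  have hl₀ : 0 ≤ l := log_nonneg ((one_le_div (by positivity)).2 (by linarith))
  calc _ ≤ ofReal B * ofReal l ^ 2 + 2 * ofReal (4 / t) * ofReal l * ofReal M :=
        hM ▸ setLIntegral_triangle_le ht (by positivity) hG_int.aemeasurable hB
    _ = ofReal (B * l ^ 2 + 2 * (4 / t) * M * l) := by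
        rw [← ENNReal.ofReal_pow hl₀, ← ENNReal.ofReal_mul hB₀, ← ENNReal.ofReal_ofNat 2,
          ← ENNReal.ofReal_mul zero_le_two, ← ENNReal.ofReal_mul (by positivity),
          ← ENNReal.ofReal_mul (by positivity), ← ENNReal.ofReal_add (by positivity) (by positivity)]
        ring_nf
    _ ≤ _ := ENNReal.ofReal_le_ofReal <| sq_add_mul_le_of_le_mul hB₀ hc hl₀
        (log_div_sq_le ht.le hε hε') (one_half_lt_log_one_div hε hε')

/-- If `G : (0,t) → [0,∞)` is integrable on `(0,t)` and bounded on every `[a,t)`,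
then `∬_{0<u<v<t} G(v−u)/((u+ε²)(t−v+ε²)) du dv ≤ C (log(1/ε))²` for all `ε ∈ (0,1/2)`. -/
theorem double_integral_log_sq_bound (t : ℝ) (ht : 0 < t) (G : ℝ → ℝ)
    (hG_nonneg : ∀ s ∈ Set.Ioo (0 : ℝ) t, 0 ≤ G s)
    (hG_int : IntegrableOn G (Set.Ioo 0 t))
    (hG_bdd : ∀ a ∈ Set.Ioo (0 : ℝ) t, ∃ B : ℝ, ∀ s ∈ Set.Ico a t, G s ≤ B) :
    ∃ C > (0 : ℝ), ∀ ε ∈ Set.Ioo (0 : ℝ) (1 / 2),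
      ∫⁻ p in {q : ℝ × ℝ | 0 < q.1 ∧ q.1 < q.2 ∧ q.2 < t},
          ENNReal.ofReal (G (p.2 - p.1) / ((p.1 + ε ^ 2) * (t - p.2 + ε ^ 2)))
        ≤ ENNReal.ofReal (C * Real.log (1 / ε) ^ 2) :=
  double_integral_log_sq_bound_general t ht G hG_int hG_bdd
end

section
/- Let t > 0 and let G : (0,t) → [0,∞) be integrable. Then there exists a constant C > 0 such that for all ε ∈ (0, 1/2), ∬_{0<u<v<2t/3} G(v−u)/(u+ε²) du dv ≤ C log(1/ε). -/
/-!
After the shear `(u, v) ↦ (u, v - u)` the integrand becomes `G(w) / (u + ε²)` with `u ∈ (0, 2t/3)`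
and `w ∈ (0, t)`, so by Tonelli the double integral is at most
`∫₀^{2t/3} du / (u + ε²) · ∫₀ᵗ G = log ((2t/3 + ε²) / ε²) · ∫₀ᵗ G`, and for `ε < 1/2` that
logarithm is `O(log (1/ε))`.
-/

open Real MeasureTheory
open scoped ENNReal

theorem lintegral_prod_mul_comp_sub {G : Type*} [MeasurableSpace G] [AddGroup G]
    [MeasurableAdd₂ G] [MeasurableNeg G] (μ : Measure G) [SFinite μ] [μ.IsAddRightInvariant]
    {f g : G → ℝ≥0∞} (hf : AEMeasurable f μ) (hg : AEMeasurable g μ) :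
    ∫⁻ p, f p.1 * g (p.2 - p.1) ∂(μ.prod μ) = (∫⁻ x, f x ∂μ) * ∫⁻ y, g y ∂μ := by
  rw [← lintegral_prod_mul hf hg]
  exact (measurePreserving_prod_sub μ μ).lintegral_comp_emb
    (MeasurableEquiv.shearSubRight G).measurableEmbedding (fun q => f q.1 * g q.2)

theorem lintegral_inv_add_Ioo {c L : ℝ} (hc : 0 < c) (hL : 0 ≤ L) :
    ∫⁻ u in Set.Ioo 0 L, ENNReal.ofReal (u + c)⁻¹ = ENNReal.ofReal (log ((L + c) / c)) := by
  have hint : IntegrableOn (fun u : ℝ => (u + c)⁻¹) (Set.Ioo 0 L) := by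
    refine (ContinuousOn.integrableOn_Icc ?_).mono_set Set.Ioo_subset_Icc_self
    exact ContinuousOn.inv₀ (by fun_prop) fun u hu => by linarith [hu.1]
  rw [← ofReal_integral_eq_lintegral_ofReal hint
    ((ae_restrict_iff' measurableSet_Ioo).2 (.of_forall fun u hu => by
      have := hu.1; positivity)),
    ← integral_Ioc_eq_integral_Ioo, ← intervalIntegral.integral_of_le hL,
    intervalIntegral.integral_comp_add_right (fun x => x⁻¹), zero_add, integral_inv]
  rw [Set.uIcc_of_le (by linarith)]
  exact fun h => by linarith [h.1]

theorem log_div_sq_le_mul_log_inv {L ε : ℝ} (hL : 0 ≤ L) (hε : ε ∈ Set.Ioo (0 : ℝ) (1 / 2)) :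
    log ((L + ε ^ 2) / ε ^ 2) ≤ (log (L + 1) / log 2 + 2) * log (1 / ε) := by
  obtain ⟨hε0, hε2⟩ := hε
  have hlog2 : 0 < log 2 := log_pos (by norm_num)
  have hlogε : log 2 ≤ log (1 / ε) :=
    log_le_log (by norm_num) (by rw [le_div_iff₀ hε0]; linarith)
  have hnum : log (L + ε ^ 2) ≤ log (L + 1) :=
    log_le_log (by positivity) (by nlinarith)
  have hden : log (ε ^ 2) = -(2 * log (1 / ε)) := by
    rw [log_pow, one_div, log_inv]; push_cast; ring
  have hscale : log (L + 1) ≤ log (L + 1) / log 2 * log (1 / ε) := by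
    rw [div_mul_eq_mul_div, le_div_iff₀ hlog2]
    exact mul_le_mul_of_nonneg_left hlogε (log_nonneg (by linarith))
  rw [log_div (by positivity) (by positivity), hden]
  linarith

theorem setLIntegral_div_comp_sub_le {G : ℝ → ℝ} {c L t : ℝ} (hc : 0 < c) (hL : 0 ≤ L)
    (hLt : L ≤ t) (hG : AEMeasurable G (volume.restrict (Set.Ioo 0 t))) :
    ∫⁻ p in {q : ℝ × ℝ | 0 < q.1 ∧ q.1 < q.2 ∧ q.2 < L},
        ENNReal.ofReal (G (p.2 - p.1) / (p.1 + c))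
      ≤ ENNReal.ofReal (log ((L + c) / c)) * ∫⁻ w in Set.Ioo 0 t, ENNReal.ofReal (G w) := by
  set f := (Set.Ioo 0 L).indicator fun u => ENNReal.ofReal (u + c)⁻¹
  set g := (Set.Ioo 0 t).indicator fun w => ENNReal.ofReal (G w)
  have hf : AEMeasurable f := (aemeasurable_indicator_iff measurableSet_Ioo).2
    (measurable_id.add_const c).inv.ennreal_ofReal.aemeasurable
  have hg : AEMeasurable g := (aemeasurable_indicator_iff measurableSet_Ioo).2 hG.ennreal_ofReal
  have hS : MeasurableSet {q : ℝ × ℝ | 0 < q.1 ∧ q.1 < q.2 ∧ q.2 < L} :=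
    (measurableSet_lt measurable_const measurable_fst).inter
      ((measurableSet_lt measurable_fst measurable_snd).inter
        (measurableSet_lt measurable_snd measurable_const))
  calc _ = ∫⁻ p in {q : ℝ × ℝ | 0 < q.1 ∧ q.1 < q.2 ∧ q.2 < L}, f p.1 * g (p.2 - p.1) := by
        refine setLIntegral_congr_fun hS fun p ⟨h0, huv, hv⟩ => ?_
        have hu : p.1 ∈ Set.Ioo 0 L := ⟨h0, by linarith⟩
        have hw : p.2 - p.1 ∈ Set.Ioo 0 t := ⟨by linarith, by linarith⟩
        simp only [f, g, Set.indicator_of_mem hu, Set.indicator_of_mem hw]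
        rw [← ENNReal.ofReal_mul (by positivity), div_eq_inv_mul]
    _ ≤ ∫⁻ p : ℝ × ℝ, f p.1 * g (p.2 - p.1) := setLIntegral_le_lintegral _ _
    _ = (∫⁻ u, f u) * ∫⁻ w, g w := by
        rw [Measure.volume_eq_prod]; exact lintegral_prod_mul_comp_sub volume hf hg
    _ = _ := by
        rw [lintegral_indicator measurableSet_Ioo, lintegral_indicator measurableSet_Ioo,
          lintegral_inv_add_Ioo hc hL]

theorem double_integral_log_bound_general (t : ℝ) (ht : 0 < t) (G : ℝ → ℝ)
    (hG_int : IntegrableOn G (Set.Ioo 0 t)) :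
    ∃ C > (0 : ℝ), ∀ ε ∈ Set.Ioo (0 : ℝ) (1 / 2),
      ∫⁻ p in {q : ℝ × ℝ | 0 < q.1 ∧ q.1 < q.2 ∧ q.2 < 2 * t / 3},
          ENNReal.ofReal (G (p.2 - p.1) / (p.1 + ε ^ 2))
        ≤ ENNReal.ofReal (C * Real.log (1 / ε)) := by
  set B := (∫⁻ w in Set.Ioo 0 t, ENNReal.ofReal (G w)).toReal
  set K := log (2 * t / 3 + 1) / log 2 + 2
  have hK : 0 < K := by
    have : 0 ≤ log (2 * t / 3 + 1) := log_nonneg (by linarith)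
    positivity
  refine ⟨(B + 1) * K, by positivity, fun ε hε => ?_⟩
  have hε0 : 0 < ε := hε.1
  have hlog_le := log_div_sq_le_mul_log_inv (by positivity : 0 ≤ 2 * t / 3) hε
  have hlog_nonneg : 0 ≤ log ((2 * t / 3 + ε ^ 2) / ε ^ 2) :=
    log_nonneg (by rw [le_div_iff₀ (by positivity)]; linarith)
  have hB : 0 ≤ B := ENNReal.toReal_nonneg
  calc _ ≤ ENNReal.ofReal (log ((2 * t / 3 + ε ^ 2) / ε ^ 2)) *
        ∫⁻ w in Set.Ioo 0 t, ENNReal.ofReal (G w) :=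
        setLIntegral_div_comp_sub_le (by positivity) (by positivity) (by linarith)
          hG_int.aemeasurable
    _ = ENNReal.ofReal (log ((2 * t / 3 + ε ^ 2) / ε ^ 2) * B) := by
        rw [ENNReal.ofReal_mul hlog_nonneg, ENNReal.ofReal_toReal hG_int.lintegral_lt_top.ne]
    _ ≤ _ := ENNReal.ofReal_le_ofReal (by nlinarith [mul_le_mul_of_nonneg_right hlog_le hB])

/-- If `G : (0,t) → [0,∞)` is integrable, then
`∬_{0<u<v<2t/3} G(v−u)/(u+ε²) du dv ≤ C log(1/ε)` for all `ε ∈ (0,1/2)`. -/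
theorem double_integral_log_bound (t : ℝ) (ht : 0 < t) (G : ℝ → ℝ)
    (hG_nonneg : ∀ s ∈ Set.Ioo (0 : ℝ) t, 0 ≤ G s)
    (hG_int : IntegrableOn G (Set.Ioo 0 t)) :
    ∃ C > (0 : ℝ), ∀ ε ∈ Set.Ioo (0 : ℝ) (1 / 2),
      ∫⁻ p in {q : ℝ × ℝ | 0 < q.1 ∧ q.1 < q.2 ∧ q.2 < 2 * t / 3},
          ENNReal.ofReal (G (p.2 - p.1) / (p.1 + ε ^ 2))
        ≤ ENNReal.ofReal (C * Real.log (1 / ε)) :=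
  double_integral_log_bound_general t ht G hG_int
end

section
/- Fix α > 2, r > 0 and t > 0, and set b_N = N^{−(α−1)}. There exists a constant C₀ > 0 (depending on α, r, t) such that for every C ≥ C₀, every integer N ≥ 2, every integer n with N/2 ≤ n ≤ N, and every s ∈ [0, b_N], C·((n+1)^α − n^α)·s − 2·(2s)^{1/α} + 7r/(10N) > 0. -/
/-!
Write `u = (2s)^{1/α}`, so that `s = u^α / 2`. If `2u` is smaller than the gap `7r/(10N)` there is
nothing to prove. Otherwise `u ≥ 7r/(20N)`, and the linear term `C((n+1)^α − n^α)s` dominates `2u`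
as soon as `C((n+1)^α − n^α) u^{α−1} ≥ 4`. Since `(n+1)^α − n^α ≥ n^{α−1} ≥ (N/2)^{α−1}`, the
powers of `N` cancel and this holds for `C ≥ 4 (7r/40)^{1−α}`.
-/

open Real

lemma rpow_sub_one_le_add_one_rpow_sub_rpow {x α : ℝ} (hx : 0 < x) (hα : 1 ≤ α) :
    x ^ (α - 1) ≤ (x + 1) ^ α - x ^ α := by
  have hmono : x ^ (α - 1) ≤ (x + 1) ^ (α - 1) :=
    rpow_le_rpow hx.le (by linarith) (by linarith)
  have hsucc : (x + 1) ^ α = (x + 1) ^ (α - 1) * (x + 1) := by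
    rw [← rpow_add_one (by positivity), sub_add_cancel]
  have hself : x ^ α = x ^ (α - 1) * x := by
    rw [← rpow_add_one hx.ne', sub_add_cancel]
  rw [hsucc, hself]
  nlinarith [rpow_nonneg hx.le (α - 1)]

lemma two_mul_rpow_one_div_lt_mul_add {α A d s : ℝ} (hα : 1 ≤ α) (hA : 0 ≤ A) (hd : 0 < d)
    (hs : 0 ≤ s) (hAd : 4 ≤ A * (d / 2) ^ (α - 1)) :
    2 * (2 * s) ^ (1 / α) < A * s + d := by
  set u := (2 * s) ^ (1 / α)
  rcases lt_or_ge (2 * u) d with hsmall | hlarge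
  · linarith [mul_nonneg hA hs]
  have hu : d / 2 ≤ u := by linarith
  have hu_pow : u ^ (α - 1) * u = 2 * s := by
    rw [← rpow_add_one (by linarith : 0 < u).ne', sub_add_cancel, ← rpow_mul (by positivity),
      one_div_mul_cancel (by positivity), rpow_one]
  have hAu : 4 ≤ A * u ^ (α - 1) := hAd.trans (by gcongr)
  have : 4 * u ≤ A * (2 * s) := by
    rw [← hu_pow, ← mul_assoc]
    exact mul_le_mul_of_nonneg_right hAu (by positivity)
  linarith

lemma half_rpow_mul_gap_rpow {N r β : ℝ} (hN : 0 < N) (hr : 0 < r) :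
    (N / 2) ^ β * (7 * r / (10 * N) / 2) ^ β = (7 * r / 40) ^ β := by
  rw [← mul_rpow (by positivity) (by positivity)]
  congr 1
  field_simp
  norm_num

theorem cone_separation_general (α r : ℝ) (hα : 2 < α) (hr : 0 < r) :
    ∃ C₀ > (0 : ℝ), ∀ C ≥ C₀, ∀ N : ℕ, 2 ≤ N → ∀ n : ℕ,
      (N : ℝ) / 2 ≤ n → n ≤ N →
      ∀ s ∈ Set.Icc (0 : ℝ) ((N : ℝ) ^ (-(α - 1))),
        C * (((n : ℝ) + 1) ^ α - (n : ℝ) ^ α) * s - 2 * (2 * s) ^ (1 / α)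
          + 7 * r / (10 * N) > 0 := by
  have hX : 0 < (7 * r / 40) ^ (α - 1) := by positivity
  refine ⟨4 / (7 * r / 40) ^ (α - 1), by positivity, ?_⟩
  intro C hC N hN n hNn _ s ⟨hs, _⟩
  have hC0 : 0 ≤ C := (by positivity : (0 : ℝ) ≤ 4 / _).trans hC
  have hN0 : (0 : ℝ) < N := by positivity
  have hn0 : (0 : ℝ) < n := lt_of_lt_of_le (by positivity) hNn
  set δ := ((n : ℝ) + 1) ^ α - (n : ℝ) ^ α
  have hδ : ((N : ℝ) / 2) ^ (α - 1) ≤ δ :=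
    (rpow_le_rpow (by positivity) hNn (by linarith)).trans
      (rpow_sub_one_le_add_one_rpow_sub_rpow hn0 (by linarith))
  have hkey : 4 ≤ C * δ * (7 * r / (10 * N) / 2) ^ (α - 1) :=
    calc (4 : ℝ)
        = 4 / (7 * r / 40) ^ (α - 1) * ((N / 2) ^ (α - 1) * (7 * r / (10 * N) / 2) ^ (α - 1)) := by
          rw [half_rpow_mul_gap_rpow hN0 hr, div_mul_cancel₀ _ hX.ne']
      _ ≤ C * δ * (7 * r / (10 * N) / 2) ^ (α - 1) := by
          rw [← mul_assoc]
          gcongr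
  have hCδ : 0 ≤ C * δ := mul_nonneg hC0 ((rpow_nonneg (by positivity) _).trans hδ)
  have := two_mul_rpow_one_div_lt_mul_add (by linarith) hCδ (by positivity) hs hkey
  linarith

/-- Separation inequality: for `α > 2`, `r > 0`, `t > 0`, there is `C₀ > 0` such that for all
`C ≥ C₀`, integers `N ≥ 2`, integers `n` with `N/2 ≤ n ≤ N`, and `s ∈ [0, N^{−(α−1)}]`,
`C·((n+1)^α − n^α)·s − 2·(2s)^{1/α} + 7r/(10N) > 0`. -/
theorem cone_separation (α r t : ℝ) (hα : 2 < α) (hr : 0 < r) (ht : 0 < t) :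
    ∃ C₀ > (0 : ℝ), ∀ C ≥ C₀, ∀ N : ℕ, 2 ≤ N → ∀ n : ℕ,
      (N : ℝ) / 2 ≤ n → n ≤ N →
      ∀ s ∈ Set.Icc (0 : ℝ) ((N : ℝ) ^ (-(α - 1))),
        C * (((n : ℝ) + 1) ^ α - (n : ℝ) ^ α) * s - 2 * (2 * s) ^ (1 / α)
          + 7 * r / (10 * N) > 0 :=
  cone_separation_general α r hα hr
end
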